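/- For every PCP instance I in which every word has length at least 2, there exists a finite Kripke structure K_I over AP such that: (i) the set of traces L(K_I) contains every well-formed trace; and (ii) every trace of K_I having a suffix in which # holds at every position is a well-formed trace. -/

import Mathlib

set_option linter.unusedVariables false

open Classical

/-- A trace over a set `AP` of atomic propositions: an infinite word over `2^AP`. -/
abbrev Trace (AP : Type) : Type := ℕ → Set AP

/-- Syntax of LTL formulas over `AP` (with `⊤`). -/
inductive LTL (AP : Type) : Type where
  | tt   : LTL AP
  | atom : AP → LTL AP
  | neg  : LTL AP → LTL AP
  | conj : LTL AP → LTL AP → LTL AP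
  | next : LTL AP → LTL AP
  | untl : LTL AP → LTL AP → LTL AP
deriving DecidableEq

namespace LTL

/-- Satisfaction of an LTL formula on a pointed trace. -/
def Sat {AP : Type} : LTL AP → Trace AP → ℕ → Prop
  | tt, _, _ => True
  | atom p, π, i => p ∈ π i
  | neg θ, π, i => ¬ Sat θ π i
  | conj θ₁ θ₂, π, i => Sat θ₁ π i ∧ Sat θ₂ π i
  | next θ, π, i => Sat θ π (i + 1)
  | untl θ₁ θ₂, π, i => ∃ j, i ≤ j ∧ Sat θ₂ π j ∧ ∀ k, i ≤ k → k < j → Sat θ₁ π k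

def or {AP : Type} (a b : LTL AP) : LTL AP := neg (conj (neg a) (neg b))
def impl {AP : Type} (a b : LTL AP) : LTL AP := or (neg a) b
def iff {AP : Type} (a b : LTL AP) : LTL AP := conj (impl a b) (impl b a)
def ev {AP : Type} (a : LTL AP) : LTL AP := untl tt a
def alw {AP : Type} (a : LTL AP) : LTL AP := neg (ev (neg a))

def bigConj {AP : Type} : List (LTL AP) → LTL AP
  | [] => tt
  | θ :: l => conj θ (bigConj l)

def bigDisj {AP : Type} : List (LTL AP) → LTL AP
  | [] => neg tt
  | θ :: l => or θ (bigDisj l)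

/-- The subformulas of an LTL formula. -/
def subf {AP : Type} [DecidableEq AP] : LTL AP → Finset (LTL AP)
  | tt => {tt}
  | atom p => {atom p}
  | neg θ => insert (neg θ) (subf θ)
  | conj a b => insert (conj a b) (subf a ∪ subf b)
  | next θ => insert (next θ) (subf θ)
  | untl a b => insert (untl a b) (subf a ∪ subf b)

/-- Negation, identifying `¬¬θ` with `θ`. -/
def negId {AP : Type} : LTL AP → LTL AP
  | neg θ => θ
  | θ => neg θ

end LTL

/-- The closure of a finite set of LTL formulas: all subformulas and their
negations (identifying `¬¬θ` with `θ`). -/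
def clOf {AP : Type} [DecidableEq AP] (Γ : Finset (LTL AP)) : Finset (LTL AP) :=
  (Γ.biUnion LTL.subf) ∪ (Γ.biUnion LTL.subf).image LTL.negId

/-- Positions `h` and `k` of `π` disagree on the truth value of some formula of `Γ`. -/
def profDiff {AP : Type} (Γ : Set (LTL AP)) (π : Trace AP) (h k : ℕ) : Prop :=
  ∃ θ ∈ Γ, ¬ (LTL.Sat θ π h ↔ LTL.Sat θ π k)

/-- `IsStutterFact Γ π m f` : the increasing sequence of positions `f 0, f 1, …`
(of length `m + 1`, where `m ∈ ℕ∪{∞}`) is the Γ-stutter factorization of `π`: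
`f 0 = 0`; the sequence is strictly increasing (below `m`); the truth value of every
formula of `Γ` is constant on each segment `[f j, f (j+1))` for `j < m` and on the
final infinite segment `[f m, ∞)` when `m` is finite; and between two adjacent
segments the truth value of some formula of `Γ` changes. -/
def IsStutterFact {AP : Type} (Γ : Set (LTL AP)) (π : Trace AP) (m : ℕ∞) (f : ℕ → ℕ) : Prop :=
  f 0 = 0 ∧
  (∀ j : ℕ, (j : ℕ∞) < m → f j < f (j + 1)) ∧
  (∀ j : ℕ, (j : ℕ∞) < m → ∀ θ ∈ Γ, ∀ h k : ℕ,
      f j ≤ h → h < f (j + 1) → f j ≤ k → k < f (j + 1) →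
      (LTL.Sat θ π h ↔ LTL.Sat θ π k)) ∧
  (∀ mf : ℕ, m = (mf : ℕ∞) → ∀ θ ∈ Γ, ∀ h k : ℕ,
      f mf ≤ h → f mf ≤ k → (LTL.Sat θ π h ↔ LTL.Sat θ π k)) ∧
  (∀ j : ℕ, (j : ℕ∞) < m → ∃ θ ∈ Γ, (LTL.Sat θ π (f j) ↔ ¬ LTL.Sat θ π (f (j + 1))))

/-- The position component of the Γ-successor `succ_Γ(π, i)` of a pointed trace:
the first position of the segment (of the Γ-stutter factorization of `π`)
following the one containing `i`, if it exists, and `i + 1` otherwise. -/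
noncomputable def succPos {AP : Type} (Γ : Set (LTL AP)) (π : Trace AP) (i : ℕ) : ℕ :=
  if h : ∃ j, i < j ∧ profDiff Γ π i j then Nat.find h else i + 1

/-- The sequence of positions of `π` selected by the Γ-stutter trace of `π`. -/
noncomputable def stfrNth {AP : Type} (Γ : Set (LTL AP)) (π : Trace AP) : ℕ → ℕ
  | 0 => 0
  | k + 1 => succPos Γ π (stfrNth Γ π k)

/-- The Γ-stutter trace `stfr_Γ(π)` of `π`. -/
noncomputable def stfr {AP : Type} (Γ : Set (LTL AP)) (π : Trace AP) : Trace AP :=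
  fun k => π (stfrNth Γ π k)

/-- Syntax of LTL_S: LTL with stutter-relativized temporal modalities. -/
inductive LTLS (AP : Type) : Type where
  | tt    : LTLS AP
  | atom  : AP → LTLS AP
  | neg   : LTLS AP → LTLS AP
  | conj  : LTLS AP → LTLS AP → LTLS AP
  | nextR : Finset (LTL AP) → LTLS AP → LTLS AP
  | untlR : Finset (LTL AP) → LTLS AP → LTLS AP → LTLS AP

/-- Satisfaction of an LTL_S formula on a pointed trace. -/
def LTLS.Sat {AP : Type} : LTLS AP → Trace AP → ℕ → Prop
  | .tt, _, _ => True
  | .atom p, π, i => p ∈ π i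
  | .neg ψ, π, i => ¬ LTLS.Sat ψ π i
  | .conj a b, π, i => LTLS.Sat a π i ∧ LTLS.Sat b π i
  | .nextR Γ ψ, π, i => LTLS.Sat ψ π (succPos (↑Γ) π i)
  | .untlR Γ a b, π, i => ∃ j : ℕ,
      LTLS.Sat b π ((succPos (↑Γ : Set (LTL AP)) π)^[j] i) ∧
      ∀ k < j, LTLS.Sat a π ((succPos (↑Γ : Set (LTL AP)) π)^[k] i)

/-- A pointed trace assignment: maps each trace variable to a pointed trace. -/
abbrev PTA (AP V : Type) : Type := V → Trace AP × ℕ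

/-- The Γ-successor of a pointed trace assignment. -/
noncomputable def succA {AP V : Type} (Γ : Set (LTL AP)) (Δ : PTA AP V) : PTA AP V :=
  fun x => ((Δ x).1, succPos Γ (Δ x).1 (Δ x).2)

/-- Quantifier-free HyperLTL_S formulas over propositions `AP` and trace variables `V`. -/
inductive HSQF (AP V : Type) : Type where
  | tt    : HSQF AP V
  | atom  : AP → V → HSQF AP V
  | neg   : HSQF AP V → HSQF AP V
  | conj  : HSQF AP V → HSQF AP V → HSQF AP V
  | nextR : Finset (LTL AP) → HSQF AP V → HSQF AP V
  | untlR : Finset (LTL AP) → HSQF AP V → HSQF AP V → HSQF AP V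

namespace HSQF

/-- Satisfaction of a quantifier-free HyperLTL_S formula on a pointed trace assignment. -/
def Sat {AP V : Type} : HSQF AP V → PTA AP V → Prop
  | tt, _ => True
  | atom p x, Δ => p ∈ (Δ x).1 (Δ x).2
  | neg ψ, Δ => ¬ Sat ψ Δ
  | conj a b, Δ => Sat a Δ ∧ Sat b Δ
  | nextR Γ ψ, Δ => Sat ψ (succA (↑Γ) Δ)
  | untlR Γ a b, Δ => ∃ i : ℕ,
      Sat b ((succA (↑Γ : Set (LTL AP)))^[i] Δ) ∧
      ∀ k < i, Sat a ((succA (↑Γ : Set (LTL AP)))^[k] Δ)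

/-- Trace variables occurring in a quantifier-free HyperLTL_S formula. -/
def vars {AP V : Type} : HSQF AP V → Set V
  | tt => ∅
  | atom _ x => {x}
  | neg ψ => vars ψ
  | conj a b => vars a ∪ vars b
  | nextR _ ψ => vars ψ
  | untlR _ a b => vars a ∪ vars b

/-- The subscripts of the temporal modalities occurring in a formula. -/
def subs {AP V : Type} : HSQF AP V → Set (Finset (LTL AP))
  | tt => ∅
  | atom _ _ => ∅
  | neg ψ => subs ψ
  | conj a b => subs a ∪ subs b
  | nextR Γ ψ => insert Γ (subs ψ)
  | untlR Γ a b => insert Γ (subs a ∪ subs b)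

/-- `ψ` is in the fragment HyperLTL_S[Γ]: every modality subscript equals `Γ`. -/
def InFragment {AP V : Type} (Γ : Finset (LTL AP)) (ψ : HSQF AP V) : Prop :=
  ∀ s ∈ ψ.subs, s = Γ

/-- `ψ` is a one-variable formula. -/
def OneVar {AP V : Type} (ψ : HSQF AP V) : Prop := ∃ x : V, ψ.vars ⊆ {x}

/-- Replace every modality subscript by `∅`, yielding a HyperLTL formula. -/
def toHLTL {AP V : Type} : HSQF AP V → HSQF AP V
  | tt => tt
  | atom p x => atom p x
  | neg ψ => neg (toHLTL ψ)
  | conj a b => conj (toHLTL a) (toHLTL b)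
  | nextR _ ψ => nextR ∅ (toHLTL ψ)
  | untlR _ a b => untlR ∅ (toHLTL a) (toHLTL b)

end HSQF

/-- Boolean combinations of formulas satisfying a base predicate. -/
inductive BoolCombOf {AP V : Type} (P : HSQF AP V → Prop) : HSQF AP V → Prop
  | base {ψ} : P ψ → BoolCombOf P ψ
  | tt : BoolCombOf P .tt
  | neg {ψ} : BoolCombOf P ψ → BoolCombOf P (.neg ψ)
  | conj {a b} : BoolCombOf P a → BoolCombOf P b → BoolCombOf P (.conj a b)

/-- Trace quantifiers. -/
inductive Quant : Type where
  | ex  : Quant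
  | all : Quant
deriving DecidableEq

/-- Satisfaction of a block of trace quantifiers followed by a matrix `P`,
over a set `L` of traces, starting from the assignment `Δ`. -/
def SatPfx {AP V : Type} [DecidableEq V] (L : Set (Trace AP)) :
    List (Quant × V) → (PTA AP V → Prop) → PTA AP V → Prop
  | [], P, Δ => P Δ
  | (Quant.ex, x) :: qs, P, Δ => ∃ π ∈ L, SatPfx L qs P (Function.update Δ x (π, 0))
  | (Quant.all, x) :: qs, P, Δ => ∀ π ∈ L, SatPfx L qs P (Function.update Δ x (π, 0))

/-- A HyperLTL_S sentence: a quantifier prefix and a quantifier-free matrix. -/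
structure HSSentence (AP V : Type) : Type where
  pre : List (Quant × V)
  matrix : HSQF AP V

/-- The sentence is closed: quantified variables are pairwise distinct and
every trace variable of the matrix is bound by the prefix. -/
def HSSentence.Closed {AP V : Type} (φ : HSSentence AP V) : Prop :=
  (φ.pre.map Prod.snd).Nodup ∧ ∀ x ∈ φ.matrix.vars, x ∈ φ.pre.map Prod.snd

/-- `L ⊨ φ` for a HyperLTL_S sentence `φ` and a set `L` of traces. -/
def HSSentence.Models {AP V : Type} [DecidableEq V] (φ : HSSentence AP V)
    (L : Set (Trace AP)) : Prop :=
  ∀ Δ₀ : PTA AP V, SatPfx L φ.pre (fun Δ => φ.matrix.Sat Δ) Δ₀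

/-- A simple HyperLTL_S sentence: its matrix is a Boolean combination of
HyperLTL_S[Γ] formulas (for a common finite set `Γ` of LTL formulas) and of
one-variable quantifier-free formulas. -/
def HSSentence.Simple {AP V : Type} (φ : HSSentence AP V) : Prop :=
  ∃ Γ : Finset (LTL AP),
    BoolCombOf (fun ψ => ψ.InFragment Γ ∨ ψ.OneVar) φ.matrix

/-- A Kripke structure over `AP` with state type `S`. -/
structure Kripke (AP S : Type) : Type where
  init : Set S
  E : Set (S × S)
  total : ∀ s : S, ∃ t : S, (s, t) ∈ E
  V : S → Set AP

namespace Kripke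

/-- A path of a Kripke structure. -/
def IsPath {AP S : Type} (K : Kripke AP S) (ν : ℕ → S) : Prop :=
  ν 0 ∈ K.init ∧ ∀ i : ℕ, (ν i, ν (i + 1)) ∈ K.E

/-- The set of traces of a Kripke structure. -/
def Lang {AP S : Type} (K : Kripke AP S) : Set (Trace AP) :=
  {π | ∃ ν : ℕ → S, K.IsPath ν ∧ π = fun i => K.V (ν i)}

/-- The set of traces of `F`-fair paths of a Kripke structure. -/
def FairLang {AP S : Type} (K : Kripke AP S) (F : Set S) : Set (Trace AP) :=
  {π | ∃ ν : ℕ → S, K.IsPath ν ∧ (∀ N : ℕ, ∃ i, N ≤ i ∧ ν i ∈ F) ∧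
        π = fun i => K.V (ν i)}

end Kripke

/-- A finite Kripke structure over `AP` (states are `Fin n`). -/
structure FinKripke (AP : Type) : Type where
  n : ℕ
  K : Kripke AP (Fin n)

def FinKripke.Lang {AP : Type} (K : FinKripke AP) : Set (Trace AP) := K.K.Lang

def FinKripke.FairLang {AP : Type} (K : FinKripke AP) (F : Set (Fin K.n)) :
    Set (Trace AP) := K.K.FairLang F

/-- A nondeterministic Büchi automaton over alphabet `Sig` (finitely many states). -/
structure NBA (Sig : Type) : Type where
  n : ℕ
  init : Set (Fin n)
  trans : Set (Fin n × Sig × Fin n)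
  acc : Set (Fin n)

/-- The ω-language of an NBA. -/
def NBA.Lang {Sig : Type} (A : NBA Sig) : Set (ℕ → Sig) :=
  {w | ∃ ρ : ℕ → Fin A.n, ρ 0 ∈ A.init ∧ (∀ i : ℕ, (ρ i, w i, ρ (i + 1)) ∈ A.trans) ∧
        ∀ N : ℕ, ∃ i, N ≤ i ∧ ρ i ∈ A.acc}

/-- Positive Boolean formulas over `X`. -/
inductive PosBool (X : Type) : Type where
  | tt   : PosBool X
  | ff   : PosBool X
  | var  : X → PosBool X
  | por  : PosBool X → PosBool X → PosBool X
  | pand : PosBool X → PosBool X → PosBool X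

/-- Satisfaction of a positive Boolean formula by a set of variables. -/
def PosBool.SatBy {X : Type} (S : Set X) : PosBool X → Prop
  | .tt => True
  | .ff => False
  | .var x => x ∈ S
  | .por a b => a.SatBy S ∨ b.SatBy S
  | .pand a b => a.SatBy S ∧ b.SatBy S

/-- A Büchi alternating asynchronous word automaton with `m` directions (an `mAAWA`)
over alphabet `Sig`, with finitely many states. -/
structure AAWA (Sig : Type) (m : ℕ) : Type where
  n : ℕ
  init : Fin n
  trans : Fin n → (Fin m → Sig) → PosBool (Fin n × Fin m)
  acc : Set (Fin n)

/-- A run of an `mAAWA` over an `m`-tuple of infinite words: a `(Q × ℕ^m)`-labeled tree. -/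
structure AAWARun {Sig : Type} {m : ℕ} (A : AAWA Sig m) (w : Fin m → (ℕ → Sig)) : Type where
  T : Set (List ℕ)
  Lab : List ℕ → Fin A.n × (Fin m → ℕ)
  rootMem : [] ∈ T
  pclosed : ∀ τ ∈ T, ∀ σ : List ℕ, σ <+: τ → σ ∈ T
  rootLab : Lab [] = (A.init, fun _ => 0)
  step : ∀ τ ∈ T, ∃ (k : ℕ) (c : Fin k → Fin A.n × Fin m),
      (A.trans (Lab τ).1 (fun d => w d ((Lab τ).2 d))).SatBy (Set.range c) ∧
      (∀ j : ℕ, τ ++ [j] ∈ T ↔ j < k) ∧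
      ∀ j : Fin k, Lab (τ ++ [j.1]) =
        ((c j).1, fun d => if d = (c j).2 then (Lab τ).2 d + 1 else (Lab τ).2 d)

/-- The node of a branch at depth `i`. -/
def branchPrefix (b : ℕ → ℕ) (i : ℕ) : List ℕ := (List.range i).map b

/-- `b` describes an infinite branch of the run tree. -/
def AAWARun.IsBranch {Sig : Type} {m : ℕ} {A : AAWA Sig m} {w : Fin m → (ℕ → Sig)}
    (r : AAWARun A w) (b : ℕ → ℕ) : Prop :=
  ∀ i : ℕ, branchPrefix b i ∈ r.T

/-- A run is accepting if every infinite branch visits accepting states infinitely often. -/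
def AAWARun.Accepting {Sig : Type} {m : ℕ} {A : AAWA Sig m} {w : Fin m → (ℕ → Sig)}
    (r : AAWARun A w) : Prop :=
  ∀ b : ℕ → ℕ, r.IsBranch b → ∀ N : ℕ, ∃ i, N ≤ i ∧ (r.Lab (branchPrefix b i)).1 ∈ A.acc

/-- The language of an `mAAWA`: the `m`-tuples of infinite words admitting an accepting run. -/
def AAWA.Lang {Sig : Type} {m : ℕ} (A : AAWA Sig m) : Set (Fin m → (ℕ → Sig)) :=
  {w | ∃ r : AAWARun A w, r.Accepting}

/-- `A` is `k`-synchronous: in every run the reading heads stay within distance `k`. -/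
def AAWA.Synchronous {Sig : Type} {m : ℕ} (A : AAWA Sig m) (k : ℕ) : Prop :=
  ∀ (w : Fin m → (ℕ → Sig)) (r : AAWARun A w), ∀ τ ∈ r.T, ∀ d d' : Fin m,
    (r.Lab τ).2 d ≤ (r.Lab τ).2 d' + k

/-- Quantifier-free HyperLTL_C formulas over propositions `AP` and trace variables `V`:
HyperLTL extended with context modalities `⟨C⟩` for nonempty sets `C` of trace variables. -/
inductive HCQF (AP V : Type) : Type where
  | tt   : HCQF AP V
  | atom : AP → V → HCQF AP V
  | neg  : HCQF AP V → HCQF AP V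
  | conj : HCQF AP V → HCQF AP V → HCQF AP V
  | next : HCQF AP V → HCQF AP V
  | untl : HCQF AP V → HCQF AP V → HCQF AP V
  | ctx  : (C : Set V) → C.Nonempty → HCQF AP V → HCQF AP V

/-- `Δ +_C i` : advance by `i` the positions of the pointed traces assigned to
the variables in the context `C`, leaving the others unchanged. -/
noncomputable def shiftA {AP V : Type} (Δ : PTA AP V) (C : Set V) (i : ℕ) : PTA AP V :=
  fun x => if x ∈ C then ((Δ x).1, (Δ x).2 + i) else Δ x

namespace HCQF

/-- Satisfaction `(Δ, C) ⊨ ψ` of a quantifier-free HyperLTL_C formula. -/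
def Sat {AP V : Type} : HCQF AP V → PTA AP V → Set V → Prop
  | tt, _, _ => True
  | atom p x, Δ, _ => p ∈ (Δ x).1 (Δ x).2
  | neg ψ, Δ, C => ¬ Sat ψ Δ C
  | conj a b, Δ, C => Sat a Δ C ∧ Sat b Δ C
  | next ψ, Δ, C => Sat ψ (shiftA Δ C 1) C
  | untl a b, Δ, C => ∃ i : ℕ, Sat b (shiftA Δ C i) C ∧ ∀ k < i, Sat a (shiftA Δ C k) C
  | ctx C' _ ψ, Δ, _ => Sat ψ Δ C'

/-- Trace variables occurring in a quantifier-free HyperLTL_C formula. -/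
def vars {AP V : Type} : HCQF AP V → Set V
  | tt => ∅
  | atom _ x => {x}
  | neg ψ => vars ψ
  | conj a b => vars a ∪ vars b
  | next ψ => vars ψ
  | untl a b => vars a ∪ vars b
  | ctx _ _ ψ => vars ψ

/-- The set of subformulas of a quantifier-free HyperLTL_C formula. -/
def subf {AP V : Type} : HCQF AP V → Set (HCQF AP V)
  | tt => {tt}
  | atom p x => {atom p x}
  | neg ψ => insert (neg ψ) (subf ψ)
  | conj a b => insert (conj a b) (subf a ∪ subf b)
  | next ψ => insert (next ψ) (subf ψ)
  | untl a b => insert (untl a b) (subf a ∪ subf b)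
  | ctx C h ψ => insert (ctx C h ψ) (subf ψ)

/-- The size of a formula: its number of distinct subformulas. -/
noncomputable def size {AP V : Type} (ψ : HCQF AP V) : ℕ := ψ.subf.ncard

/-- Nesting depth of context modalities. -/
def ctxDepth {AP V : Type} : HCQF AP V → ℕ
  | tt => 0
  | atom _ _ => 0
  | neg ψ => ctxDepth ψ
  | conj a b => max (ctxDepth a) (ctxDepth b)
  | next ψ => ctxDepth ψ
  | untl a b => max (ctxDepth a) (ctxDepth b)
  | ctx _ _ ψ => ctxDepth ψ + 1

/-- Auxiliary predicate for the bounded fragment. `glob` is the set of all trace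
variables occurring in the formula of interest (a context `C` is global iff
`glob ⊆ C`); the flag records whether the current position is in the scope of a
non-global context modality, where only the temporal modality `X` is allowed. -/
def BoundedAux {AP V : Type} (glob : Set V) : Bool → HCQF AP V → Prop
  | _, tt => True
  | _, atom _ _ => True
  | t, neg ψ => BoundedAux glob t ψ
  | t, conj a b => BoundedAux glob t a ∧ BoundedAux glob t b
  | t, next ψ => BoundedAux glob t ψ
  | false, untl a b => BoundedAux glob false a ∧ BoundedAux glob false b
  | true, untl _ _ => False
  | t, ctx C _ ψ => (glob ⊆ C → BoundedAux glob false ψ) ∧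
                    (¬ glob ⊆ C → BoundedAux glob true ψ)

/-- `ψ` is bounded: the only temporal modality occurring in (the scope of) a
non-global context is the next modality `X`. -/
def IsBounded {AP V : Type} (ψ : HCQF AP V) : Prop := BoundedAux ψ.vars false ψ

/-- Auxiliary predicate for the fragment where each temporal modality occurring in
(the scope of) a non-global context is the eventually modality `F` (i.e. `⊤ U ·`). -/
def FOnlyAux {AP V : Type} (glob : Set V) : Bool → HCQF AP V → Prop
  | _, tt => True
  | _, atom _ _ => True
  | t, neg ψ => FOnlyAux glob t ψ
  | t, conj a b => FOnlyAux glob t a ∧ FOnlyAux glob t b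
  | false, next ψ => FOnlyAux glob false ψ
  | true, next _ => False
  | false, untl a b => FOnlyAux glob false a ∧ FOnlyAux glob false b
  | true, untl a b => a = tt ∧ FOnlyAux glob true b
  | t, ctx C _ ψ => (glob ⊆ C → FOnlyAux glob false ψ) ∧
                    (¬ glob ⊆ C → FOnlyAux glob true ψ)

/-- Every temporal modality occurring in the scope of a non-global context
modality is the eventually modality `F`. -/
def FOnlyInNonGlobal {AP V : Type} (glob : Set V) (ψ : HCQF AP V) : Prop :=
  FOnlyAux glob false ψ

end HCQF

/-- A HyperLTL_C sentence: a quantifier prefix and a quantifier-free matrix. -/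
structure HCSentence (AP V : Type) : Type where
  pre : List (Quant × V)
  matrix : HCQF AP V

/-- The sentence is closed: quantified variables are pairwise distinct and every
trace variable of the matrix is bound by the prefix. -/
def HCSentence.Closed {AP V : Type} (φ : HCSentence AP V) : Prop :=
  (φ.pre.map Prod.snd).Nodup ∧ ∀ x ∈ φ.matrix.vars, x ∈ φ.pre.map Prod.snd

/-- `L ⊨ φ` for a HyperLTL_C sentence `φ` and a set `L` of traces
(the matrix is evaluated in the global context `VAR`). -/
def HCSentence.Models {AP V : Type} [DecidableEq V] (φ : HCSentence AP V)
    (L : Set (Trace AP)) : Prop :=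
  ∀ Δ₀ : PTA AP V, SatPfx L φ.pre (fun Δ => φ.matrix.Sat Δ Set.univ) Δ₀

/-- An instance of Post's Correspondence Problem over the alphabet `A`:
`2 * n` nonempty finite words. -/
structure PCPInstance (A : Type) : Type where
  n : ℕ
  npos : 0 < n
  word : Fin 2 → Fin n → List A
  ne : ∀ (ℓ : Fin 2) (i : Fin n), word ℓ i ≠ []

/-- The PCP instance has a solution. -/
def PCPInstance.HasSolution {A : Type} (P : PCPInstance A) : Prop :=
  ∃ is : List (Fin P.n), is ≠ [] ∧
    (is.map (P.word 0)).flatten = (is.map (P.word 1)).flatten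

/-- Atomic propositions used in the PCP reduction:
`AP = Σ ∪ {#} ∪ {p₁,…,pₙ} ∪ {q₁,q₂}`. -/
inductive PCPAP (A : Type) (n : ℕ) : Type where
  | sym  : A → PCPAP A n
  | hash : PCPAP A n
  | pvar : Fin n → PCPAP A n
  | qvar : Fin 2 → PCPAP A n
deriving DecidableEq

/-- `[u, p_i, q_ℓ]` : the word `u` marked with `p_i` and `q_ℓ`, whose last letter is
additionally marked with `#`. -/
def markWord {A : Type} {n : ℕ} (i : Fin n) (ℓ : Fin 2) : List A → List (Set (PCPAP A n))
  | [] => []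
  | [a] => [{PCPAP.sym a, PCPAP.pvar i, PCPAP.qvar ℓ, PCPAP.hash}]
  | a :: b :: rest => ({PCPAP.sym a, PCPAP.pvar i, PCPAP.qvar ℓ} : Set (PCPAP A n)) ::
      markWord i ℓ (b :: rest)

/-- The trace consisting of the finite word `l` followed by the trace `tail`. -/
def listToTrace {A : Type} (l : List (Set A)) (tail : Trace A) : Trace A :=
  fun k => if h : k < l.length then l.get ⟨k, h⟩ else tail (k - l.length)

/-- The well-formed trace `π^ℓ_{i₁,…,i_k} = {#}·[u^ℓ_{i₁},p_{i₁},q_ℓ]⋯[u^ℓ_{i_k},p_{i_k},q_ℓ]·{#}^ω`. -/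
def wfTrace {A : Type} (P : PCPInstance A) (ℓ : Fin 2) (is : List (Fin P.n)) :
    Trace (PCPAP A P.n) :=
  listToTrace (({PCPAP.hash} : Set (PCPAP A P.n)) ::
      (is.map fun i => markWord i ℓ (P.word ℓ i)).flatten)
    (fun _ => {PCPAP.hash})

/-- A well-formed trace for the PCP instance `P`. -/
def IsWellFormed {A : Type} (P : PCPInstance A) (π : Trace (PCPAP A P.n)) : Prop :=
  ∃ (ℓ : Fin 2) (is : List (Fin P.n)), is ≠ [] ∧ π = wfTrace P ℓ is

/-- The set `Γ = {#, p₁, …, pₙ}` of atomic propositions. -/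
def pcpGammaProp (A : Type) (n : ℕ) : Set (PCPAP A n) :=
  {x | x = PCPAP.hash ∨ ∃ i : Fin n, x = PCPAP.pvar i}

/-- The set `Γ = {#, p₁, …, pₙ}` regarded as a set of LTL formulas. -/
def pcpGammaLTL (A : Type) (n : ℕ) : Set (LTL (PCPAP A n)) :=
  LTL.atom '' pcpGammaProp A n

/-- The set `Γ = {#, p₁, …, pₙ}` as a finite set of LTL formulas. -/
def pcpGammaFinset (A : Type) [DecidableEq A] (n : ℕ) : Finset (LTL (PCPAP A n)) :=
  insert (LTL.atom PCPAP.hash)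
    ((Finset.univ : Finset (Fin n)).image fun i => LTL.atom (PCPAP.pvar i))

/-- Instructions of a Minsky 2-counter machine. -/
inductive MOp : Type where
  | inc  : MOp
  | dec  : MOp
  | zero : MOp
deriving DecidableEq

/-- A Minsky 2-counter machine (locations are `Fin nQ`; no transition leaves the
halting location). -/
structure Minsky : Type where
  nQ : ℕ
  qinit : Fin nQ
  qhalt : Fin nQ
  trans : Set (Fin nQ × (MOp × Fin 2) × Fin nQ)
  halt_no_out : ∀ q op q', (q, op, q') ∈ trans → q ≠ qhalt

/-- The one-step relation between configurations of a Minsky machine. -/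
def Minsky.Step (M : Minsky) (c c' : Fin M.nQ × (Fin 2 → ℕ)) : Prop :=
  ∃ (op : MOp) (cnt : Fin 2), (c.1, (op, cnt), c'.1) ∈ M.trans ∧
    (∀ d : Fin 2, d ≠ cnt → c'.2 d = c.2 d) ∧
    (match op with
      | MOp.inc => c'.2 cnt = c.2 cnt + 1
      | MOp.dec => 0 < c.2 cnt ∧ c'.2 cnt + 1 = c.2 cnt
      | MOp.zero => c.2 cnt = 0 ∧ c'.2 cnt = 0)

/-- The machine halts: some computation from the initial configuration reaches the
halting location. -/
def Minsky.Halts (M : Minsky) : Prop :=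
  ∃ c : Fin M.nQ × (Fin 2 → ℕ),
    Relation.ReflTransGen M.Step (M.qinit, fun _ => 0) c ∧ c.1 = M.qhalt

/-- Projection of a trace over `AP ⊕ B` onto `AP`. -/
def projSum {AP B : Type} (w : Trace (AP ⊕ B)) : Trace AP :=
  fun i => {p | Sum.inl p ∈ w i}

/-- The proposition `at(θ)` associated with an LTL formula (`at(p) = p` for atoms). -/
def atProp {AP : Type} : LTL AP → AP ⊕ LTL AP
  | LTL.atom p => Sum.inl p
  | θ => Sum.inr θ
namespace PCPK

lemma listToTrace_lt {A : Type} {l : List (Set A)} {t : Trace A} {k : ℕ}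
    (h : k < l.length) : listToTrace l t k = l.get ⟨k, h⟩ := by
  simp [listToTrace, h]

lemma listToTrace_ge {A : Type} {l : List (Set A)} {t : Trace A} {k : ℕ}
    (h : l.length ≤ k) : listToTrace l t k = t (k - l.length) := by
  rw [listToTrace, dif_neg (Nat.not_lt.2 h)]

lemma listToTrace_append {A : Type} (l₁ l₂ : List (Set A)) (t : Trace A) :
    listToTrace (l₁ ++ l₂) t = listToTrace l₁ (listToTrace l₂ t) := by
  funext k
  by_cases h1 : k < l₁.length
  · rw [listToTrace_lt (by simp; omega), listToTrace_lt h1]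
    simp [List.getElem_append_left h1]
  · push_neg at h1
    rw [listToTrace_ge h1]
    by_cases h2 : k < l₁.length + l₂.length
    · rw [listToTrace_lt (by simp; omega), listToTrace_lt (by omega)]
      simp [List.getElem_append_right h1]
    · push_neg at h2
      rw [listToTrace_ge (by simp; omega), listToTrace_ge (by omega)]
      rw [List.length_append, Nat.sub_sub]

lemma length_markWord {A : Type} {n : ℕ} (i : Fin n) (ℓ : Fin 2) :
    ∀ w : List A, (markWord i ℓ w).length = w.length := by
  intro w
  induction w with
  | nil => simp [markWord]
  | cons a t ih =>
    cases t with
    | nil => simp [markWord]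
    | cons b r => simp [markWord] at ih ⊢; omega

lemma markWord_hash {A : Type} {n : ℕ} (i : Fin n) (ℓ : Fin 2) :
    ∀ (w : List A) (j : ℕ),
      PCPAP.hash ∈ (markWord i ℓ w).getD j ∅ → j + 1 = w.length := by
  intro w
  induction w with
  | nil => intro j hj; simp [markWord, List.getD] at hj
  | cons a t ih =>
    cases t with
    | nil =>
      intro j hj
      match j with
      | 0 => simp
      | j + 1 => simp [markWord, List.getD] at hj
    | cons b r =>
      intro j hj
      match j with
      | 0 =>
        simp [markWord, List.getD] at hj
      | j + 1 =>
        simp [markWord, List.getD] at hj ih ⊢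
        have := ih j (by simpa [List.getD] using hj)
        omega

variable {A : Type} (P : PCPInstance A)

def len (ℓ : Fin 2) (i : Fin P.n) : ℕ := (P.word ℓ i).length

lemma len_pos (ℓ : Fin 2) (i : Fin P.n) : 0 < len P ℓ i :=
  List.length_pos_iff.2 (P.ne ℓ i)

def Lmax : ℕ := Finset.univ.sup (fun p : Fin 2 × Fin P.n => len P p.1 p.2)

lemma len_le_Lmax (ℓ : Fin 2) (i : Fin P.n) : len P ℓ i ≤ Lmax P :=
  Finset.le_sup (f := fun p : Fin 2 × Fin P.n => len P p.1 p.2) (Finset.mem_univ (ℓ, i))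

abbrev St := Fin 2 ⊕ (Fin 2 × Fin P.n × Fin (Lmax P))

def lab : St P → Set (PCPAP A P.n)
  | Sum.inl _ => {PCPAP.hash}
  | Sum.inr (ℓ, i, j) => (markWord i ℓ (P.word ℓ i)).getD j ∅

def R : St P → St P → Prop
  | Sum.inl a, Sum.inl b => a = 1 ∧ b = 1
  | Sum.inl a, Sum.inr x => a = 0 ∧ (x.2.2 : ℕ) = 0
  | Sum.inr (ℓ, i, j), Sum.inl b => b = 1 ∧ len P ℓ i ≤ (j : ℕ) + 1
  | Sum.inr (ℓ, i, j), Sum.inr (ℓ', i', j') =>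
      ℓ' = ℓ ∧ ((i' = i ∧ (j' : ℕ) = (j : ℕ) + 1 ∧ (j : ℕ) + 2 ≤ len P ℓ i) ∨
        ((j : ℕ) + 1 = len P ℓ i ∧ (j' : ℕ) = 0))

def i0 : Fin P.n := ⟨0, P.npos⟩

lemma Lmax_pos : 0 < Lmax P :=
  lt_of_lt_of_le (len_pos P 0 (i0 P)) (len_le_Lmax P 0 (i0 P))

def pcpK : Kripke (PCPAP A P.n) (St P) where
  init := {Sum.inl 0}
  E := {p | R P p.1 p.2}
  total := by
    rintro (a | ⟨ℓ, i, j⟩)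
    · by_cases h : a = 0
      · exact ⟨Sum.inr (0, i0 P, ⟨0, Lmax_pos P⟩), by simp [R, h]⟩
      · have ha : a = 1 := by fin_omega
        exact ⟨Sum.inl 1, by simp [R, ha]⟩
    · by_cases h : (j : ℕ) + 2 ≤ len P ℓ i
      · refine ⟨Sum.inr (ℓ, i, ⟨(j : ℕ) + 1, lt_of_lt_of_le (by omega) (len_le_Lmax P ℓ i)⟩), ?_⟩
        simp [R]
        omega
      · exact ⟨Sum.inl 1, by simp [R]; omega⟩
  V := lab P

def blocks (ℓ : Fin 2) (is : List (Fin P.n)) : List (Set (PCPAP A P.n)) :=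
  (is.map fun i => markWord i ℓ (P.word ℓ i)).flatten

def hashT : Trace (PCPAP A P.n) := fun _ => {PCPAP.hash}

def pathOf (ℓ : Fin 2) : List (Fin P.n) → ℕ → St P
  | [], _ => Sum.inl 1
  | i :: rest, k =>
    if h : k < len P ℓ i then Sum.inr (ℓ, i, ⟨k, lt_of_lt_of_le h (len_le_Lmax P ℓ i)⟩)
    else pathOf ℓ rest (k - len P ℓ i)

lemma pathOf_lab (ℓ : Fin 2) :
    ∀ (is : List (Fin P.n)) (k : ℕ),
      lab P (pathOf P ℓ is k) = listToTrace (blocks P ℓ is) (hashT P) k := by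
  intro is
  induction is with
  | nil => intro k; simp [pathOf, blocks, lab, hashT, listToTrace]
  | cons i rest ih =>
    intro k
    have hW : (markWord i ℓ (P.word ℓ i)).length = len P ℓ i := length_markWord i ℓ _
    have hb : blocks P ℓ (i :: rest) = markWord i ℓ (P.word ℓ i) ++ blocks P ℓ rest := by
      simp [blocks]
    rw [hb, listToTrace_append]
    by_cases h : k < len P ℓ i
    · rw [pathOf, dif_pos h, listToTrace_lt (by omega)]
      simp only [lab]
      rw [List.getD_eq_getElem _ _ (by omega)]
      simp
    · rw [pathOf, dif_neg h, listToTrace_ge (by omega), ih, hW]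

lemma pathOf_step (ℓ : Fin 2) :
    ∀ (is : List (Fin P.n)) (k : ℕ), R P (pathOf P ℓ is k) (pathOf P ℓ is (k + 1)) := by
  intro is
  induction is with
  | nil => intro k; simp [pathOf, R]
  | cons i rest ih =>
    intro k
    by_cases h1 : k + 1 < len P ℓ i
    · rw [pathOf, dif_pos (by omega), pathOf, dif_pos h1]
      simp [R]
      omega
    · by_cases h2 : k < len P ℓ i
      · rw [pathOf, dif_pos h2, pathOf, dif_neg h1]
        have hk1 : k + 1 - len P ℓ i = 0 := by omega
        rw [hk1]
        cases rest with
        | nil => simp [pathOf, R]; omega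
        | cons i' r' =>
          rw [pathOf, dif_pos (len_pos P ℓ i')]
          simp [R]
          omega
      · rw [pathOf, dif_neg h2, pathOf, dif_neg h1]
        have : k + 1 - len P ℓ i = (k - len P ℓ i) + 1 := by omega
        rw [this]
        exact ih _

lemma listToTrace_eq_getD {B : Type} {l : List (Set B)} {t : Trace B} {k : ℕ}
    (h : k < l.length) : listToTrace l t k = l.getD k ∅ := by
  rw [listToTrace_lt h, List.getD_eq_getElem _ _ h]
  simp

lemma listToTrace_cons_zero {B : Type} (x : Set B) (l : List (Set B)) (t : Trace B) :
    listToTrace (x :: l) t 0 = x := by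
  rw [listToTrace_lt (by simp)]
  simp

lemma listToTrace_cons_succ {B : Type} (x : Set B) (l : List (Set B)) (t : Trace B) (k : ℕ) :
    listToTrace (x :: l) t (k + 1) = listToTrace l t k := by
  by_cases h : k < l.length
  · rw [listToTrace_lt (by simp; omega), listToTrace_lt h]
    simp
  · rw [listToTrace_ge (by simp; omega), listToTrace_ge (by omega)]
    simp

lemma wf_mem (ℓ : Fin 2) (is : List (Fin P.n)) (hne : is ≠ []) :
    wfTrace P ℓ is ∈ (pcpK P).Lang := by
  refine ⟨fun k => match k with | 0 => Sum.inl 0 | (k + 1) => pathOf P ℓ is k, ⟨rfl, ?_⟩, ?_⟩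
  · intro k
    cases k with
    | zero =>
      show R P (Sum.inl 0) (pathOf P ℓ is 0)
      cases is with
      | nil => exact absurd rfl hne
      | cons i rest =>
        rw [pathOf, dif_pos (len_pos P ℓ i)]
        simp [R]
    | succ k =>
      show R P (pathOf P ℓ is k) (pathOf P ℓ is (k + 1))
      exact pathOf_step P ℓ is k
  · funext k
    cases k with
    | zero =>
      show wfTrace P ℓ is 0 = lab P (Sum.inl 0)
      rw [wfTrace, listToTrace_cons_zero]
      simp [lab]
    | succ k =>
      show wfTrace P ℓ is (k + 1) = lab P (pathOf P ℓ is k)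
      rw [wfTrace, listToTrace_cons_succ, pathOf_lab]
      rfl

def mapK {AP S T : Type} (e : S ≃ T) (K : Kripke AP S) : Kripke AP T where
  init := {t | e.symm t ∈ K.init}
  E := {p | (e.symm p.1, e.symm p.2) ∈ K.E}
  total := fun t => by
    obtain ⟨s', hs⟩ := K.total (e.symm t)
    exact ⟨e s', by simpa using hs⟩
  V := fun t => K.V (e.symm t)

lemma mapK_lang {AP S T : Type} (e : S ≃ T) (K : Kripke AP S) :
    (mapK e K).Lang = K.Lang := by
  ext π
  constructor
  · rintro ⟨ν, ⟨h0, hE⟩, rfl⟩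
    exact ⟨fun k => e.symm (ν k), ⟨h0, hE⟩, rfl⟩
  · rintro ⟨ν, ⟨h0, hE⟩, rfl⟩
    refine ⟨fun k => e (ν k), ⟨by simpa [mapK] using h0, fun i => by simpa [mapK] using hE i⟩, ?_⟩
    funext k
    simp [mapK]

lemma lang_wf (hlen : ∀ (ℓ : Fin 2) (i : Fin P.n), 2 ≤ len P ℓ i)
    (π : Trace (PCPAP A P.n)) (hπ : π ∈ (pcpK P).Lang)
    (hh : ∃ m : ℕ, ∀ h : ℕ, m ≤ h → PCPAP.hash ∈ π h) : IsWellFormed P π := by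
  obtain ⟨ν, ⟨h0, hE⟩, rfl⟩ := hπ
  have h0' : ν 0 = Sum.inl 0 := h0
  have hE' : ∀ k, R P (ν k) (ν (k + 1)) := hE
  obtain ⟨m, hm⟩ := hh
  obtain ⟨ℓ₁, i₁, j₁, hν1, hj1⟩ :
      ∃ (ℓ : Fin 2) (i : Fin P.n) (j : Fin (Lmax P)), ν 1 = Sum.inr (ℓ, i, j) ∧ (j : ℕ) = 0 := by
    have h := hE' 0
    rw [h0'] at h
    cases hs : ν 1 with
    | inl b => rw [hs] at h; exact absurd h.1 (by decide)
    | inr x =>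
      obtain ⟨ℓ, i, j⟩ := x
      rw [hs] at h
      exact ⟨ℓ, i, j, rfl, h.2⟩
  have habs : ∀ N, ν N = Sum.inl 1 → ∀ k, N ≤ k → ν k = Sum.inl 1 := by
    intro N hN k hk
    induction k, hk using Nat.le_induction with
    | base => exact hN
    | succ k hk ihk =>
      have h := hE' k
      rw [ihk] at h
      cases hs : ν (k + 1) with
      | inl b => rw [hs] at h; rw [h.2]
      | inr x => rw [hs] at h; exact absurd h.1 (by decide)
  have htail : ∃ N, ν N = Sum.inl 1 := by
    by_contra hnot
    push_neg at hnot
    have Z : ∀ M h ℓ i (j : Fin (Lmax P)), len P ℓ i - (j : ℕ) ≤ M →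
        ν h = Sum.inr (ℓ, i, j) →
        ∃ h', h < h' ∧ ∃ (ℓ' : Fin 2) (i' : Fin P.n) (j' : Fin (Lmax P)),
          ν h' = Sum.inr (ℓ', i', j') ∧ (j' : ℕ) = 0 := by
      intro M
      induction M with
      | zero =>
        intro h ℓ i j hM hν
        exfalso
        have hstep := hE' h
        rw [hν] at hstep
        cases hs : ν (h + 1) with
        | inl b =>
          rw [hs] at hstep
          exact hnot (h + 1) (by rw [hs, hstep.1])
        | inr x =>
          obtain ⟨ℓ₂, i₂, j₂⟩ := x
          rw [hs] at hstep
          have := len_pos P ℓ i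
          rcases hstep.2 with ⟨_, _, hc⟩ | ⟨hc, _⟩ <;> omega
      | succ M ih =>
        intro h ℓ i j hM hν
        have hstep := hE' h
        rw [hν] at hstep
        cases hs : ν (h + 1) with
        | inl b =>
          exfalso
          rw [hs] at hstep
          exact hnot (h + 1) (by rw [hs, hstep.1])
        | inr x =>
          obtain ⟨ℓ₂, i₂, j₂⟩ := x
          rw [hs] at hstep
          obtain ⟨hℓ₂, hcase⟩ := hstep
          rcases hcase with ⟨hi₂, hj₂, hle⟩ | ⟨heq, hj₂⟩
          · rw [hℓ₂, hi₂] at hs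
            obtain ⟨h', hh', rest⟩ := ih (h + 1) ℓ i j₂ (by omega) hs
            exact ⟨h', by omega, rest⟩
          · exact ⟨h + 1, by omega, ℓ₂, i₂, j₂, hs, hj₂⟩
    have zeros : ∀ c, ∃ h, c ≤ h ∧ ∃ (ℓ : Fin 2) (i : Fin P.n) (j : Fin (Lmax P)),
        ν h = Sum.inr (ℓ, i, j) ∧ (j : ℕ) = 0 := by
      intro c
      induction c with
      | zero => exact ⟨1, by omega, ℓ₁, i₁, j₁, hν1, hj1⟩
      | succ c ihc =>
        obtain ⟨h, hch, ℓ, i, j, hν, hj0⟩ := ihc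
        obtain ⟨h', hh', rest⟩ := Z (len P ℓ i - (j : ℕ)) h ℓ i j le_rfl hν
        exact ⟨h', by omega, rest⟩
    obtain ⟨h, hmh, ℓ, i, j, hν, hj0⟩ := zeros m
    have hx : PCPAP.hash ∈ lab P (ν h) := hm h hmh
    rw [hν] at hx
    have hone : (0 : ℕ) + 1 = (P.word ℓ i).length := by
      apply markWord_hash i ℓ
      simpa [lab, hj0] using hx
    have := hlen ℓ i
    simp only [len] at this
    omega
  obtain ⟨N, hN⟩ := htail
  have hltN : ∀ h x, ν h = Sum.inr x → h < N := by
    intro h x hx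
    by_contra hc
    push_neg at hc
    have := habs N hN h hc
    rw [hx] at this
    cases this
  have claim : ∀ M h ℓ i (j : Fin (Lmax P)), N - h ≤ M → ν h = Sum.inr (ℓ, i, j) →
      (j : ℕ) = 0 → ∃ is : List (Fin P.n), is ≠ [] ∧
        ∀ k, lab P (ν (h + k)) = listToTrace (blocks P ℓ is) (hashT P) k := by
    intro M
    induction M with
    | zero =>
      intro h ℓ i j hM hν hj0
      exact absurd (hltN h _ hν) (by omega)
    | succ M ih =>
      intro h ℓ i j hM hν hj0
      have hL2 := hlen ℓ i
      have hlt' := hltN _ _ hν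
      have block : ∀ c, c < len P ℓ i →
          ∃ jc : Fin (Lmax P), ν (h + c) = Sum.inr (ℓ, i, jc) ∧ (jc : ℕ) = c := by
        intro c
        induction c with
        | zero => intro _; exact ⟨j, by simpa using hν, hj0⟩
        | succ c ihc =>
          intro hc
          obtain ⟨jc, hνc, hjc⟩ := ihc (by omega)
          have hstep := hE' (h + c)
          rw [hνc] at hstep
          cases hs : ν (h + c + 1) with
          | inl b =>
            rw [hs] at hstep
            exact absurd hstep.2 (by omega)
          | inr x =>
            obtain ⟨ℓ₂, i₂, j₂⟩ := x
            rw [hs] at hstep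
            obtain ⟨hℓ₂, hcase⟩ := hstep
            rcases hcase with ⟨hi₂, hj₂, _⟩ | ⟨heq, _⟩
            · rw [hℓ₂, hi₂] at hs
              exact ⟨j₂, by rw [hℓ₂, hi₂], by omega⟩
            · exact absurd heq (by omega)
      obtain ⟨jl, hνl, hjl⟩ := block (len P ℓ i - 1) (by omega)
      have hstep := hE' (h + (len P ℓ i - 1))
      rw [hνl] at hstep
      have hidx : h + (len P ℓ i - 1) + 1 = h + len P ℓ i := by omega
      have hW : (markWord i ℓ (P.word ℓ i)).length = len P ℓ i := length_markWord i ℓ _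
      rw [hidx] at hstep
      cases hs : ν (h + len P ℓ i) with
      | inl b =>
        rw [hs] at hstep
        have hb1 : ν (h + len P ℓ i) = Sum.inl 1 := by rw [hs, hstep.1]
        refine ⟨[i], by simp, ?_⟩
        intro k
        have hbl : blocks P ℓ [i] = markWord i ℓ (P.word ℓ i) := by simp [blocks]
        rw [hbl]
        by_cases hk : k < len P ℓ i
        · obtain ⟨jk, hνk, hjk⟩ := block k hk
          rw [hνk, listToTrace_eq_getD (by omega)]
          simp only [lab]
          rw [hjk]
        · have hik : ν (h + k) = Sum.inl 1 := habs (h + len P ℓ i) hb1 (h + k) (by omega)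
          rw [hik, listToTrace_ge (by omega)]
          simp [lab, hashT]
      | inr x =>
        obtain ⟨ℓ₂, i₂, j₂⟩ := x
        rw [hs] at hstep
        obtain ⟨hℓ₂, hcase⟩ := hstep
        have hj₂0 : (j₂ : ℕ) = 0 := by
          rcases hcase with ⟨_, hc, hc'⟩ | ⟨_, hc⟩ <;> omega
        rw [hℓ₂] at hs
        obtain ⟨is', hne', hlab'⟩ := ih (h + len P ℓ i) ℓ i₂ j₂ (by omega) hs hj₂0
        refine ⟨i :: is', by simp, ?_⟩
        intro k
        have hbl : blocks P ℓ (i :: is') = markWord i ℓ (P.word ℓ i) ++ blocks P ℓ is' := by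
          simp [blocks]
        rw [hbl, listToTrace_append]
        by_cases hk : k < len P ℓ i
        · obtain ⟨jk, hνk, hjk⟩ := block k hk
          rw [hνk, listToTrace_eq_getD (by omega)]
          simp only [lab]
          rw [hjk]
        · rw [listToTrace_ge (by omega)]
          have hidx2 : h + k = (h + len P ℓ i) + (k - len P ℓ i) := by omega
          rw [hidx2, hlab', hW]
  obtain ⟨is, hne, hlab⟩ := claim N 1 ℓ₁ i₁ j₁ (by omega) hν1 hj1
  refine ⟨ℓ₁, is, hne, ?_⟩
  funext k
  show lab P (ν k) = wfTrace P ℓ₁ is k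
  cases k with
  | zero =>
    rw [h0']
    unfold wfTrace
    rw [listToTrace_cons_zero]
    rfl
  | succ k =>
    unfold wfTrace
    rw [listToTrace_cons_succ]
    have h1k := hlab k
    rw [show 1 + k = k + 1 by omega] at h1k
    rw [h1k]
    unfold blocks hashT
    rfl

end PCPK

theorem stmt6 (A : Type) [Fintype A] (P : PCPInstance A)
    (hlen : ∀ (ℓ : Fin 2) (i : Fin P.n), 2 ≤ (P.word ℓ i).length) :
    ∃ K : FinKripke (PCPAP A P.n),
      (∀ π, IsWellFormed P π → π ∈ K.Lang) ∧
      (∀ π ∈ K.Lang, (∃ m : ℕ, ∀ h : ℕ, m ≤ h → PCPAP.hash ∈ π h) →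
        IsWellFormed P π) := by
  classical
  refine ⟨⟨Fintype.card (PCPK.St P), PCPK.mapK (Fintype.equivFin (PCPK.St P)) (PCPK.pcpK P)⟩,
    ?_, ?_⟩
  · intro π hwf
    obtain ⟨ℓ, is, hne, rfl⟩ := hwf
    show _ ∈ Kripke.Lang _
    rw [PCPK.mapK_lang]
    exact PCPK.wf_mem P ℓ is hne
  · intro π hπ hh
    apply PCPK.lang_wf P (fun ℓ i => hlen ℓ i) π ?_ hh
    have hπ' : π ∈ (PCPK.mapK (Fintype.equivFin (PCPK.St P)) (PCPK.pcpK P)).Lang := hπ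
    rwa [PCPK.mapK_lang] at hπ'
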